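/- arXiv:1701.05727 — 2 statements merged into one kernel-verified Lean document; each statement's English description precedes it below -/
import Mathlib

section
/- With the zero-momentum class 𝒜 as above, if G and H are finite sums of monomials in 𝒜, then the Poisson bracket {G,H} = ⟨∂G/∂θ, ∂H/∂I⟩ − ⟨∂G/∂I, ∂H/∂θ⟩ + ⟨∂G/∂φ, ∂H/∂J⟩ − ⟨∂G/∂J, ∂H/∂φ⟩ + i Σ_{n∈ℤ^d₁} (∂G/∂u_n · ∂H/∂ū_n − ∂G/∂ū_n · ∂H/∂u_n) + i Σ_{n∈ℤ^d₂} (∂G/∂v_n · ∂H/∂v̄_n − ∂G/∂v̄_n · ∂H/∂v_n) again belongs to 𝒜. -/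
/-- The exponent data of a monomial
`e^{i(⟨k,θ⟩+⟨k',φ⟩)} I^l J^l' u^α ū^β v^αv v̄^βv`. -/
structure MonomialIdx (b b' d : ℕ) where
  k : Fin b → ℤ
  k' : Fin b' → ℤ
  l : Fin b → ℕ
  l' : Fin b' → ℕ
  α : (Fin d → ℤ) →₀ ℕ
  β : (Fin d → ℤ) →₀ ℕ
  αv : (Fin d → ℤ) →₀ ℕ
  βv : (Fin d → ℤ) →₀ ℕ

/-- The momentum of a monomial, relative to tangential sites `i` and `t`. -/
def momentum {b b' d : ℕ} (i : Fin b → (Fin d → ℤ)) (t : Fin b' → (Fin d → ℤ))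
    (x : MonomialIdx b b' d) : Fin d → ℤ :=
  (∑ j, x.k j • i j) + (∑ j, x.k' j • t j)
    + (x.α.sum fun n a => (a : ℤ) • n) - (x.β.sum fun n a => (a : ℤ) • n)
    + (x.αv.sum fun n a => (a : ℤ) • n) - (x.βv.sum fun n a => (a : ℤ) • n)

/-- A formal function: a finite linear combination of monomials. -/
abbrev FormalSum (b b' d : ℕ) := MonomialIdx b b' d →₀ ℂ

/-- The zero-momentum class `𝒜`. -/
def inClassA {b b' d : ℕ} (i : Fin b → (Fin d → ℤ)) (t : Fin b' → (Fin d → ℤ))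
    (f : FormalSum b b' d) : Prop :=
  ∀ x ∈ f.support, momentum i t x = 0

/-- The Poisson bracket of two monomials `x`, `y` (with coefficient `1`), as a formal sum:
`{G,H} = ⟨∂G/∂θ, ∂H/∂I⟩ − ⟨∂G/∂I, ∂H/∂θ⟩ + ⟨∂G/∂φ, ∂H/∂J⟩ − ⟨∂G/∂J, ∂H/∂φ⟩
  + i Σ_n (∂G/∂u_n ∂H/∂ū_n − ∂G/∂ū_n ∂H/∂u_n)
  + i Σ_n (∂G/∂v_n ∂H/∂v̄_n − ∂G/∂v̄_n ∂H/∂v_n)`. -/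
noncomputable def monomialBracket {b b' d : ℕ} (x y : MonomialIdx b b' d) :
    FormalSum b b' d :=
  (∑ j : Fin b, Finsupp.single
      ⟨x.k + y.k, x.k' + y.k', x.l + (y.l - Pi.single j 1), x.l' + y.l',
        x.α + y.α, x.β + y.β, x.αv + y.αv, x.βv + y.βv⟩
      (Complex.I * (x.k j : ℂ) * (y.l j : ℂ)))
  - (∑ j : Fin b, Finsupp.single
      ⟨x.k + y.k, x.k' + y.k', (x.l - Pi.single j 1) + y.l, x.l' + y.l',
        x.α + y.α, x.β + y.β, x.αv + y.αv, x.βv + y.βv⟩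
      (Complex.I * (y.k j : ℂ) * (x.l j : ℂ)))
  + (∑ j : Fin b', Finsupp.single
      ⟨x.k + y.k, x.k' + y.k', x.l + y.l, x.l' + (y.l' - Pi.single j 1),
        x.α + y.α, x.β + y.β, x.αv + y.αv, x.βv + y.βv⟩
      (Complex.I * (x.k' j : ℂ) * (y.l' j : ℂ)))
  - (∑ j : Fin b', Finsupp.single
      ⟨x.k + y.k, x.k' + y.k', x.l + y.l, (x.l' - Pi.single j 1) + y.l',
        x.α + y.α, x.β + y.β, x.αv + y.αv, x.βv + y.βv⟩
      (Complex.I * (y.k' j : ℂ) * (x.l' j : ℂ)))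
  + (∑ n ∈ ((x.α.support ∪ x.β.support) ∪ (y.α.support ∪ y.β.support)),
      Finsupp.single
        ⟨x.k + y.k, x.k' + y.k', x.l + y.l, x.l' + y.l',
          (x.α + y.α) - Finsupp.single n 1, (x.β + y.β) - Finsupp.single n 1,
          x.αv + y.αv, x.βv + y.βv⟩
        (Complex.I * ((x.α n : ℂ) * (y.β n : ℂ) - (x.β n : ℂ) * (y.α n : ℂ))))
  + (∑ n ∈ ((x.αv.support ∪ x.βv.support) ∪ (y.αv.support ∪ y.βv.support)),
      Finsupp.single
        ⟨x.k + y.k, x.k' + y.k', x.l + y.l, x.l' + y.l',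
          x.α + y.α, x.β + y.β,
          (x.αv + y.αv) - Finsupp.single n 1, (x.βv + y.βv) - Finsupp.single n 1⟩
        (Complex.I * ((x.αv n : ℂ) * (y.βv n : ℂ) - (x.βv n : ℂ) * (y.αv n : ℂ))))

/-- The Poisson bracket of two formal sums, extended bilinearly from monomials. -/
noncomputable def poissonBracket {b b' d : ℕ} (G H : FormalSum b b' d) :
    FormalSum b b' d :=
  G.sum fun x c₁ => H.sum fun y c₂ => (c₁ * c₂) • monomialBracket x y


section Helpers

variable {b b' d : ℕ} (i : Fin b → (Fin d → ℤ)) (t : Fin b' → (Fin d → ℤ))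

/-- The ℤ-linearization of an exponent finsupp. -/
def Mmt {d : ℕ} (μ : (Fin d → ℤ) →₀ ℕ) : Fin d → ℤ := μ.sum fun n a => (a : ℤ) • n

lemma Mmt_add {d : ℕ} (μ ν : (Fin d → ℤ) →₀ ℕ) : Mmt (μ + ν) = Mmt μ + Mmt ν := by
  unfold Mmt
  apply Finsupp.sum_add_index' (by intro n; simp)
  intro n a b; push_cast; rw [add_smul]

lemma Mmt_sub_single {d : ℕ} (μ : (Fin d → ℤ) →₀ ℕ) (n : Fin d → ℤ) (h : μ n ≠ 0) :
    Mmt (μ - Finsupp.single n 1) = Mmt μ - n := by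
  have hle : Finsupp.single n 1 ≤ μ := by
    rw [Finsupp.single_le_iff]; omega
  have hμ : (μ - Finsupp.single n 1) + Finsupp.single n 1 = μ := tsub_add_cancel_of_le hle
  have h2 := Mmt_add (μ - Finsupp.single n 1) (Finsupp.single n 1)
  rw [hμ] at h2
  have hs : Mmt (Finsupp.single n 1) = n := by
    unfold Mmt; rw [Finsupp.sum_single_index] <;> simp
  rw [h2, hs]; abel

lemma momentum_eq (x : MonomialIdx b b' d) :
    momentum i t x = (∑ j, x.k j • i j) + (∑ j, x.k' j • t j)
      + Mmt x.α - Mmt x.β + Mmt x.αv - Mmt x.βv := rfl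

lemma momentum_mk_add (x y : MonomialIdx b b' d) (l : Fin b → ℕ) (l' : Fin b' → ℕ) :
    momentum i t ⟨x.k + y.k, x.k' + y.k', l, l', x.α + y.α, x.β + y.β,
      x.αv + y.αv, x.βv + y.βv⟩ = momentum i t x + momentum i t y := by
  rw [momentum_eq, momentum_eq, momentum_eq]
  simp only [Mmt_add, Pi.add_apply, add_smul, Finset.sum_add_distrib]
  abel

lemma momentum_mk_u (x y : MonomialIdx b b' d) (n : Fin d → ℤ)
    (hα : (x.α + y.α) n ≠ 0) (hβ : (x.β + y.β) n ≠ 0) :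
    momentum i t ⟨x.k + y.k, x.k' + y.k', x.l + y.l, x.l' + y.l',
      (x.α + y.α) - Finsupp.single n 1, (x.β + y.β) - Finsupp.single n 1,
      x.αv + y.αv, x.βv + y.βv⟩ = momentum i t x + momentum i t y := by
  rw [momentum_eq, momentum_eq, momentum_eq]
  simp only [Mmt_sub_single _ _ hα, Mmt_sub_single _ _ hβ, Mmt_add,
    Pi.add_apply, add_smul, Finset.sum_add_distrib]
  abel

lemma momentum_mk_v (x y : MonomialIdx b b' d) (n : Fin d → ℤ)
    (hα : (x.αv + y.αv) n ≠ 0) (hβ : (x.βv + y.βv) n ≠ 0) :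
    momentum i t ⟨x.k + y.k, x.k' + y.k', x.l + y.l, x.l' + y.l',
      x.α + y.α, x.β + y.β,
      (x.αv + y.αv) - Finsupp.single n 1, (x.βv + y.βv) - Finsupp.single n 1⟩
      = momentum i t x + momentum i t y := by
  rw [momentum_eq, momentum_eq, momentum_eq]
  simp only [Mmt_sub_single _ _ hα, Mmt_sub_single _ _ hβ, Mmt_add,
    Pi.add_apply, add_smul, Finset.sum_add_distrib]
  abel

lemma bracket_momentum (x y z : MonomialIdx b b' d)
    (hx : momentum i t x = 0) (hy : momentum i t y = 0)
    (hz : z ∈ (monomialBracket x y).support) : momentum i t z = 0 := by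
  classical
  have goal_of : ∀ w : MonomialIdx b b' d,
      momentum i t w = momentum i t x + momentum i t y → w = z → momentum i t z = 0 := by
    intro w hw hwz
    rw [← hwz, hw, hx, hy, add_zero]
  unfold monomialBracket at hz
  rcases Finset.mem_union.mp (Finsupp.support_add hz) with h | h
  rotate_left
  · -- v-sum
    obtain ⟨n, _, hn⟩ := Finsupp.mem_support_finset_sum _ h
    rw [Finsupp.mem_support_single] at hn
    obtain ⟨hzn, hc⟩ := hn
    have hα : (x.αv + y.αv) n ≠ 0 := by
      intro h0
      simp only [Finsupp.add_apply, Nat.add_eq_zero] at h0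
      simp [h0.1, h0.2] at hc
    have hβ : (x.βv + y.βv) n ≠ 0 := by
      intro h0
      simp only [Finsupp.add_apply, Nat.add_eq_zero] at h0
      simp [h0.1, h0.2] at hc
    exact goal_of _ (momentum_mk_v i t x y n hα hβ) hzn.symm
  rcases Finset.mem_union.mp (Finsupp.support_add h) with h | h
  rotate_left
  · -- u-sum
    obtain ⟨n, _, hn⟩ := Finsupp.mem_support_finset_sum _ h
    rw [Finsupp.mem_support_single] at hn
    obtain ⟨hzn, hc⟩ := hn
    have hα : (x.α + y.α) n ≠ 0 := by
      intro h0
      simp only [Finsupp.add_apply, Nat.add_eq_zero] at h0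
      simp [h0.1, h0.2] at hc
    have hβ : (x.β + y.β) n ≠ 0 := by
      intro h0
      simp only [Finsupp.add_apply, Nat.add_eq_zero] at h0
      simp [h0.1, h0.2] at hc
    exact goal_of _ (momentum_mk_u i t x y n hα hβ) hzn.symm
  rcases Finset.mem_union.mp (Finsupp.support_sub h) with h | h
  rotate_left
  · obtain ⟨j, _, hn⟩ := Finsupp.mem_support_finset_sum _ h
    rw [Finsupp.mem_support_single] at hn
    exact goal_of _ (momentum_mk_add i t x y _ _) hn.1.symm
  rcases Finset.mem_union.mp (Finsupp.support_add h) with h | h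
  rotate_left
  · obtain ⟨j, _, hn⟩ := Finsupp.mem_support_finset_sum _ h
    rw [Finsupp.mem_support_single] at hn
    exact goal_of _ (momentum_mk_add i t x y _ _) hn.1.symm
  rcases Finset.mem_union.mp (Finsupp.support_sub h) with h | h
  · obtain ⟨j, _, hn⟩ := Finsupp.mem_support_finset_sum _ h
    rw [Finsupp.mem_support_single] at hn
    exact goal_of _ (momentum_mk_add i t x y _ _) hn.1.symm
  · obtain ⟨j, _, hn⟩ := Finsupp.mem_support_finset_sum _ h
    rw [Finsupp.mem_support_single] at hn
    exact goal_of _ (momentum_mk_add i t x y _ _) hn.1.symm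

end Helpers

/-- Lemma 4.3: the Poisson bracket of two functions in the zero-momentum class `𝒜`
again belongs to `𝒜`. -/
theorem stmt_5 {b b' d : ℕ} (i : Fin b → (Fin d → ℤ)) (t : Fin b' → (Fin d → ℤ))
    (G H : FormalSum b b' d)
    (hG : inClassA i t G) (hH : inClassA i t H) :
    inClassA i t (poissonBracket G H) := by
  intro z hz
  rw [Finsupp.mem_support_iff] at hz
  by_contra hm
  apply hz
  unfold poissonBracket
  rw [Finsupp.sum_apply]
  apply Finset.sum_eq_zero
  intro x hxs
  dsimp only
  rw [Finsupp.sum_apply]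
  apply Finset.sum_eq_zero
  intro y hys
  dsimp only
  rw [Finsupp.smul_apply]
  have hzb : z ∉ (monomialBracket x y).support := fun hmem =>
    hm (bracket_momentum i t x y z (hG x hxs) (hH y hys) hmem)
  rw [Finsupp.notMem_support_iff] at hzb
  rw [hzb, smul_zero]
end

section
/- Define a sequence by ε₀ = ε and ε_{ν+1} = c·γ^{−16}·K_ν^{16τ+16}·ε_ν^{4/3}, where K_ν = c'·2^{ν+1}·ln(ε_ν^{−1}) for constants c, c', γ, τ > 0. Then there exists ε* > 0 such that for all 0 < ε < ε*, the sequence ε_ν converges to 0, and in fact ε_ν ≤ ε^{(7/6)^ν} for all ν. -/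
open Real

/-- The KAM error sequence: `ε₀ = ε`,
`ε_{ν+1} = c·γ⁻¹⁶·K_ν^{16τ+16}·ε_ν^{4/3}` with `K_ν = c'·2^{ν+1}·ln(ε_ν⁻¹)`. -/
noncomputable def kamSeq (c c' γ τ ε : ℝ) : ℕ → ℝ
  | 0 => ε
  | ν + 1 =>
      c * γ ^ (-(16 : ℝ)) *
        (c' * 2 ^ (ν + 1) * Real.log (kamSeq c c' γ τ ε ν)⁻¹) ^ (16 * τ + 16) *
        (kamSeq c c' γ τ ε ν) ^ ((4 : ℝ) / 3)

/-- One-step bound: if `0 < x < 1` then the next term is positive and bounded by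
`B * 2^(ν*p) * x^(31/24)`. -/
lemma kam_step (c c' γ τ ε : ℝ) (hc : 0 < c) (hc' : 0 < c') (hγ : 0 < γ) (hτ : 0 < τ)
    (ν : ℕ) (hpos : 0 < kamSeq c c' γ τ ε ν) (hlt1 : kamSeq c c' γ τ ε ν < 1) :
    0 < kamSeq c c' γ τ ε (ν + 1) ∧
    kamSeq c c' γ τ ε (ν + 1) ≤
      (c * γ ^ (-(16 : ℝ)) * c' ^ (16 * τ + 16) * (24 * (16 * τ + 16)) ^ (16 * τ + 16) *
          2 ^ (16 * τ + 16)) *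
        2 ^ ((ν : ℝ) * (16 * τ + 16)) * (kamSeq c c' γ τ ε ν) ^ ((31 : ℝ) / 24) := by
  set x := kamSeq c c' γ τ ε ν with hx
  set p : ℝ := 16 * τ + 16 with hp_def
  have hp : 0 < p := by positivity
  set δ : ℝ := 1 / (24 * p) with hδ_def
  have hδ : 0 < δ := by positivity
  have hδp : δ * p = 1 / 24 := by rw [hδ_def]; field_simp
  have hγ16 : 0 < γ ^ (-(16 : ℝ)) := rpow_pos_of_pos hγ _
  have hlog : 0 < Real.log x⁻¹ := Real.log_pos ((one_lt_inv₀ hpos).2 hlt1)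
  have h2ν : (0:ℝ) < 2 ^ (ν + 1) := by positivity
  have hK : 0 < c' * 2 ^ (ν + 1) * Real.log x⁻¹ := by positivity
  have hunfold : kamSeq c c' γ τ ε (ν + 1) =
      c * γ ^ (-(16 : ℝ)) * (c' * 2 ^ (ν + 1) * Real.log x⁻¹) ^ p * x ^ ((4 : ℝ) / 3) := by
    rw [kamSeq]
  constructor
  · rw [hunfold]
    have := rpow_pos_of_pos hK p
    have := rpow_pos_of_pos hpos ((4:ℝ)/3)
    positivity
  · rw [hunfold]
    -- bound the log
    have hlogle : Real.log x⁻¹ ≤ δ⁻¹ * x ^ (-δ) := by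
      have h1 : Real.log x⁻¹ ≤ (x⁻¹) ^ δ / δ :=
        Real.log_le_rpow_div (inv_nonneg.2 hpos.le) hδ
      have h2 : (x⁻¹) ^ δ = x ^ (-δ) := by
        rw [Real.inv_rpow hpos.le, ← Real.rpow_neg hpos.le]
      rw [h2] at h1
      calc Real.log x⁻¹ ≤ x ^ (-δ) / δ := h1
        _ = δ⁻¹ * x ^ (-δ) := by ring
    have hKle : c' * 2 ^ (ν + 1) * Real.log x⁻¹ ≤ c' * 2 ^ (ν + 1) * (δ⁻¹ * x ^ (-δ)) := by
      apply mul_le_mul_of_nonneg_left hlogle (by positivity)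
    have hxneg : 0 < x ^ (-δ) := rpow_pos_of_pos hpos _
    have hKp : (c' * 2 ^ (ν + 1) * Real.log x⁻¹) ^ p ≤
        (c' * 2 ^ (ν + 1) * (δ⁻¹ * x ^ (-δ))) ^ p :=
      rpow_le_rpow hK.le hKle hp.le
    have hmain : c * γ ^ (-(16 : ℝ)) * (c' * 2 ^ (ν + 1) * Real.log x⁻¹) ^ p * x ^ ((4:ℝ)/3) ≤
        c * γ ^ (-(16 : ℝ)) * (c' * 2 ^ (ν + 1) * (δ⁻¹ * x ^ (-δ))) ^ p * x ^ ((4:ℝ)/3) := by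
      have hx43 : 0 < x ^ ((4:ℝ)/3) := rpow_pos_of_pos hpos _
      apply mul_le_mul_of_nonneg_right _ hx43.le
      exact mul_le_mul_of_nonneg_left hKp (by positivity)
    refine hmain.trans (le_of_eq ?_)
    -- now an identity
    have e1 : (c' * 2 ^ (ν + 1) * (δ⁻¹ * x ^ (-δ))) ^ p =
        c' ^ p * ((2:ℝ) ^ (ν + 1)) ^ p * δ⁻¹ ^ p * (x ^ (-δ)) ^ p := by
      rw [Real.mul_rpow (by positivity) (by positivity),
          Real.mul_rpow (by positivity) (by positivity),
          Real.mul_rpow (by positivity) (by positivity)]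
      ring
    have e2 : ((2:ℝ) ^ (ν + 1)) ^ p = 2 ^ ((ν:ℝ) * p) * 2 ^ p := by
      rw [← Real.rpow_natCast (2:ℝ) (ν + 1), ← Real.rpow_mul (by norm_num),
          ← Real.rpow_add (by norm_num : (0:ℝ) < 2)]
      push_cast
      ring_nf
    have e3 : (x ^ (-δ)) ^ p = x ^ (-(1/24 : ℝ)) := by
      rw [← Real.rpow_mul hpos.le]
      congr 1
      rw [neg_mul, hδp]
    have e4 : δ⁻¹ ^ p = (24 * p) ^ p := by
      rw [hδ_def]
      norm_num
    have e5 : x ^ (-(1/24 : ℝ)) * x ^ ((4:ℝ)/3) = x ^ ((31:ℝ)/24) := by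
      rw [← Real.rpow_add hpos]
      norm_num
    rw [e1, e2, e3, e4]
    calc c * γ ^ (-(16:ℝ)) *
          (c' ^ p * (2 ^ ((ν:ℝ) * p) * 2 ^ p) * (24 * p) ^ p * x ^ (-(1/24:ℝ))) * x ^ ((4:ℝ)/3)
        = c * γ ^ (-(16:ℝ)) * c' ^ p * (24 * p) ^ p * 2 ^ p * 2 ^ ((ν:ℝ) * p) *
            (x ^ (-(1/24:ℝ)) * x ^ ((4:ℝ)/3)) := by ring
      _ = c * γ ^ (-(16:ℝ)) * c' ^ p * (24 * p) ^ p * 2 ^ p * 2 ^ ((ν:ℝ) * p) *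
            x ^ ((31:ℝ)/24) := by rw [e5]

theorem stmt_9 (c c' γ τ : ℝ) (hc : 0 < c) (hc' : 0 < c') (hγ : 0 < γ) (hτ : 0 < τ) :
    ∃ εstar > 0, ∀ ε : ℝ, 0 < ε → ε < εstar →
      Filter.Tendsto (kamSeq c c' γ τ ε) Filter.atTop (nhds 0) ∧
      ∀ ν : ℕ, kamSeq c c' γ τ ε ν ≤ ε ^ ((7 / 6 : ℝ) ^ ν) := by
  set p : ℝ := 16 * τ + 16 with hp_def
  have hp : 0 < p := by positivity
  have hγ16 : 0 < γ ^ (-(16 : ℝ)) := rpow_pos_of_pos hγ _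
  set B : ℝ := c * γ ^ (-(16 : ℝ)) * c' ^ p * (24 * p) ^ p * 2 ^ p with hB_def
  have hB : 0 < B := by
    have h1 : (0:ℝ) < c' ^ p := rpow_pos_of_pos hc' _
    have h2 : (0:ℝ) < (24 * p) ^ p := rpow_pos_of_pos (by positivity) _
    have h3 : (0:ℝ) < (2:ℝ) ^ p := rpow_pos_of_pos (by norm_num) _
    positivity
  set M : ℝ := max (8 * Real.log B) (48 * (p * Real.log 2)) with hM_def
  clear_value p B M
  refine ⟨min (1/2) (Real.exp (-M)), by positivity, ?_⟩
  intro ε hε hεlt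
  have hε1 : ε < 1 := lt_of_lt_of_le (hεlt.trans_le (min_le_left _ _)) (by norm_num)
  set L : ℝ := Real.log ε⁻¹ with hL_def
  clear_value L
  have hLM : M < L := by
    have h1 : ε < Real.exp (-M) := hεlt.trans_le (min_le_right _ _)
    have h2 : Real.log ε < -M := by
      calc Real.log ε < Real.log (Real.exp (-M)) := Real.log_lt_log hε h1
        _ = -M := Real.log_exp _
    rw [hL_def, Real.log_inv]
    linarith
  have hL1 : 8 * Real.log B ≤ M := by rw [hM_def]; exact le_max_left _ _
  have hL2 : 48 * (p * Real.log 2) ≤ M := by rw [hM_def]; exact le_max_right _ _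
  have hL0 : 0 < L := by
    have : (0:ℝ) ≤ 48 * (p * Real.log 2) := by
      have := Real.log_nonneg (by norm_num : (1:ℝ) ≤ 2)
      positivity
    linarith [this.trans hL2]
  have hlogε : Real.log ε = -L := by rw [hL_def, Real.log_inv]; ring
  -- the crucial smallness inequality used at each step
  have hsmall : ∀ ν : ℕ, B * 2 ^ ((ν:ℝ) * p) * ε ^ ((7/6:ℝ) ^ ν / 8) ≤ 1 := by
    intro ν
    have hbern : 1 + (ν:ℝ) * (1/6) ≤ (7/6:ℝ) ^ ν := by
      have := one_add_mul_le_pow (a := (1/6:ℝ)) (by norm_num) ν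
      norm_num at this ⊢
      linarith
    have hεpow : ε ^ ((7/6:ℝ) ^ ν / 8) = Real.exp (-(L * ((7/6:ℝ) ^ ν / 8))) := by
      rw [Real.rpow_def_of_pos hε, hlogε]
      ring_nf
    have h2pow : (2:ℝ) ^ ((ν:ℝ) * p) = Real.exp (Real.log 2 * ((ν:ℝ) * p)) := by
      rw [Real.rpow_def_of_pos (by norm_num)]
    have hBexp : B = Real.exp (Real.log B) := (Real.exp_log hB).symm
    rw [hεpow, h2pow, hBexp, ← Real.exp_add, ← Real.exp_add]
    rw [show (1:ℝ) = Real.exp 0 from (Real.exp_zero).symm]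
    apply Real.exp_le_exp.2
    -- need: log B + log 2 * (ν * p) - L * ((7/6)^ν / 8) ≤ 0
    have k1 : Real.log B ≤ L / 8 := by linarith
    have k2 : Real.log 2 * ((ν:ℝ) * p) ≤ (ν:ℝ) * L / 48 := by
      have h := mul_le_mul_of_nonneg_left (hL2.trans hLM.le) (Nat.cast_nonneg ν : (0:ℝ) ≤ ν)
      have h' : Real.log 2 * ((ν:ℝ) * p) = ((ν:ℝ) * (48 * (p * Real.log 2))) / 48 := by ring
      rw [h']
      linarith
    have k3 : L / 8 + (ν:ℝ) * L / 48 ≤ L * ((7/6:ℝ) ^ ν / 8) := by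
      have := mul_le_mul_of_nonneg_left hbern hL0.le
      nlinarith
    linarith
  -- the inductive bound
  have key : ∀ ν : ℕ, 0 < kamSeq c c' γ τ ε ν ∧ kamSeq c c' γ τ ε ν ≤ ε ^ ((7/6:ℝ) ^ ν) := by
    intro ν
    induction ν with
    | zero => exact ⟨hε, by simp [kamSeq]⟩
    | succ ν ih =>
      obtain ⟨hpos, hle⟩ := ih
      have hElt1 : ε ^ ((7/6:ℝ) ^ ν) < 1 :=
        Real.rpow_lt_one hε.le hε1 (by positivity)
      have hlt1 : kamSeq c c' γ τ ε ν < 1 := hle.trans_lt hElt1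
      obtain ⟨hpos', hle'⟩ := kam_step c c' γ τ ε hc hc' hγ hτ ν hpos hlt1
      refine ⟨hpos', hle'.trans ?_⟩
      have hx31 : (kamSeq c c' γ τ ε ν) ^ ((31:ℝ)/24) ≤ (ε ^ ((7/6:ℝ) ^ ν)) ^ ((31:ℝ)/24) :=
        Real.rpow_le_rpow hpos.le hle (by norm_num)
      have hEsplit : (ε ^ ((7/6:ℝ) ^ ν)) ^ ((31:ℝ)/24) =
          ε ^ ((7/6:ℝ) ^ (ν+1)) * ε ^ ((7/6:ℝ) ^ ν / 8) := by
        rw [← Real.rpow_mul hε.le, ← Real.rpow_add hε]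
        congr 1
        rw [pow_succ]
        ring
      rw [← hp_def, ← hB_def]
      calc B * 2 ^ ((ν:ℝ) * p) * (kamSeq c c' γ τ ε ν) ^ ((31:ℝ)/24)
          ≤ B * 2 ^ ((ν:ℝ) * p) * ((ε ^ ((7/6:ℝ) ^ ν)) ^ ((31:ℝ)/24)) := by
            apply mul_le_mul_of_nonneg_left hx31
            have : (0:ℝ) < (2:ℝ) ^ ((ν:ℝ) * p) := rpow_pos_of_pos (by norm_num) _
            positivity
        _ = (B * 2 ^ ((ν:ℝ) * p) * ε ^ ((7/6:ℝ) ^ ν / 8)) * ε ^ ((7/6:ℝ) ^ (ν+1)) := by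
            rw [hEsplit]; ring
        _ ≤ 1 * ε ^ ((7/6:ℝ) ^ (ν+1)) := by
            apply mul_le_mul_of_nonneg_right (hsmall ν)
            positivity
        _ = ε ^ ((7/6:ℝ) ^ (ν+1)) := one_mul _
  constructor
  · apply squeeze_zero (fun n => (key n).1.le) (fun n => (key n).2)
    have h1 : Filter.Tendsto (fun ν : ℕ => ((7/6:ℝ)) ^ ν) Filter.atTop Filter.atTop :=
      tendsto_pow_atTop_atTop_of_one_lt (by norm_num)
    have h2 := tendsto_rpow_atTop_of_base_lt_one ε (by linarith) hε1
    exact h2.comp h1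
  · exact fun ν => (key ν).2
end
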